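/- In the Banach space ℓ1 of absolutely summable real sequences with standard basis vectors (e_n), let A = { (e_m − e_n)/2 : m, n ∈ ℕ, m < n }. Then the closure of A in the weak topology of ℓ1 equals A ∪ {0}, and every subset of A ∪ {0} that is compact in the weak topology of ℓ1 is finite. -/

import Mathlib

open Topology

/-- The Banach space `ℓ¹` of absolutely summable real sequences. -/
abbrev ell1 : Type := lp (fun _ : ℕ => ℝ) 1

/-- The `n`-th standard basis vector of `ℓ¹`. -/
noncomputable def e (n : ℕ) : ell1 := lp.single 1 n (1 : ℝ)

/-- The set `A = {(e_m - e_n)/2 : m < n}`, viewed inside `ℓ¹` with its weak topology. -/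
noncomputable def A : Set (WeakSpace ℝ ell1) :=
  {x | ∃ m n : ℕ, m < n ∧ (toWeakSpace ℝ ell1).symm x = (2 : ℝ)⁻¹ • (e m - e n)}

/-
A continuous functional `f` on `ℓ¹` takes the value `(f eₘ - f eₙ)/2` on `A`. Evaluating the
coordinates, their pairwise sums and differences, and the total sum on a weak limit point `v` of
`A` shows that all coordinates of `v` lie in `{-1/2, 0, 1/2}`, with at most one of each sign,
summing to `0`, and with the positive one first: so `v = 0` or `v ∈ A`. Conversely `(f eₖ)` is
bounded, so it converges along a free ultrafilter, and along the curried ultrafilter on pairs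
`m < n` the points of `A` tend weakly to `0`.

Each point `(eₘ - eₙ)/2` of `A` is isolated by the functional `x ↦ xₘ - xₙ`, so `A` is weakly
discrete. If a compact `C ⊆ A ∪ {0}` were infinite, a diagonal choice gives `B ⊆ ℕ` and infinitely
many points `(eₘ - eₙ)/2 ∈ C` with `m ∈ B`, `n ∉ B`. The functional `x ↦ ∑_{k ∈ B} xₖ` is `1/2` on
them and `0` at `0`, so they lie in a compact discrete, hence finite, subset of `C`.
-/

open Filter Set

section WeakTopology

variable {𝕜 E : Type*} [CommSemiring 𝕜] [TopologicalSpace 𝕜] [ContinuousAdd 𝕜]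
  [ContinuousConstSMul 𝕜 𝕜] [AddCommMonoid E] [Module 𝕜 E] [TopologicalSpace E]

theorem continuous_apply_toWeakSpace_symm (f : E →L[𝕜] 𝕜) :
    Continuous fun y : WeakSpace 𝕜 E => f ((toWeakSpace 𝕜 E).symm y) :=
  WeakBilin.eval_continuous _ f

theorem WeakSpace.tendsto_nhds_iff {ι : Type*} {l : Filter ι} {u : ι → WeakSpace 𝕜 E}
    {x : WeakSpace 𝕜 E} :
    Tendsto u l (𝓝 x) ↔ ∀ f : E →L[𝕜] 𝕜,
      Tendsto (fun i => f ((toWeakSpace 𝕜 E).symm (u i))) l (𝓝 (f ((toWeakSpace 𝕜 E).symm x))) := by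
  rw [← tendsto_pi_nhds]
  exact (IsInducing.induced _).tendsto_nhds_iff

theorem apply_mem_of_mem_closure {s : Set (WeakSpace 𝕜 E)} {x : WeakSpace 𝕜 E}
    (hx : x ∈ closure s) (f : E →L[𝕜] 𝕜) {T : Set 𝕜} (hT : IsClosed T)
    (hsT : ∀ y ∈ s, f ((toWeakSpace 𝕜 E).symm y) ∈ T) : f ((toWeakSpace 𝕜 E).symm x) ∈ T :=
  hT.closure_subset <|
    map_mem_closure (X := WeakSpace 𝕜 E) (continuous_apply_toWeakSpace_symm f) hx hsT

end WeakTopology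

theorem zero_mem_closure_sub_of_norm_le {E : Type*} [NormedAddCommGroup E] [NormedSpace ℝ E]
    (x : ℕ → E) {C : ℝ} (hx : ∀ k, ‖x k‖ ≤ C) :
    (0 : WeakSpace ℝ E) ∈
      closure {y | ∃ m n : ℕ, m < n ∧ (toWeakSpace ℝ E).symm y = x m - x n} := by
  let U := hyperfilter ℕ
  have hU : Tendsto id (U : Filter ℕ) atTop := Nat.cofinite_eq_atTop ▸ hyperfilter_le_cofinite
  have hlt : ∃ᶠ p in (U : Filter ℕ).curry U, p.1 < p.2 :=
    (frequently_curry_iff _).2 (Eventually.frequently (.of_forall fun m =>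
      (hU.eventually_gt_atTop m).frequently))
  refine mem_closure_of_frequently_of_tendsto
    (f := fun p : ℕ × ℕ => toWeakSpace ℝ E (x p.1 - x p.2))
    (hlt.mono fun p hp => ⟨p.1, p.2, hp, rfl⟩) ?_
  refine WeakSpace.tendsto_nhds_iff.2 fun f => ?_
  have hbdd : ∀ k, f (x k) ∈ Metric.closedBall 0 (‖f‖ * C) := fun k =>
    mem_closedBall_zero_iff.2 ((f.le_opNorm _).trans (by gcongr; exact hx k))
  obtain ⟨L, -, hL⟩ := isCompact_iff_ultrafilter_le_nhds'.1 (isCompact_closedBall (0 : ℝ) _)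
    (U.map fun k => f (x k)) (Ultrafilter.mem_map.2 (univ_mem' hbdd))
  replace hL : Tendsto (fun k => f (x k)) U (𝓝 L) := hL
  simpa using ((hL.comp tendsto_fst).sub (hL.comp tendsto_snd)).mono_left curry_le_prod

namespace lp

variable {𝕜 α E : Type*} [NormedRing 𝕜] [NormedAddCommGroup E] [Module 𝕜 E] [IsBoundedSMul 𝕜 E]
  {p : ENNReal} [Fact (1 ≤ p)]

variable (𝕜 E p) in
noncomputable def indicatorCLM (s : Set α) :
    lp (fun _ : α => E) p →L[𝕜] lp (fun _ : α => E) p :=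
  LinearMap.mkContinuous
    { toFun x := ⟨s.indicator x, (lp.memℓp x).mono' fun i => norm_indicator_le_norm_self x i⟩
      map_add' x y := lp.ext (indicator_add' s x y)
      map_smul' c x := lp.ext (indicator_const_smul s c x) }
    1 fun x => by
      simpa using lp.norm_mono (zero_lt_one.trans_le Fact.out).ne' fun i =>
        norm_indicator_le_norm_self x i

@[simp]
theorem coe_indicatorCLM (s : Set α) (x : lp (fun _ : α => E) p) :
    ⇑(indicatorCLM 𝕜 E p s x) = s.indicator x :=
  rfl

end lp

theorem exists_pos_of_tsum_eq_zero {ι : Type*} {w : ι → ℝ} (hw : Summable w)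
    (hsum : ∑' i, w i = 0) (hne : w ≠ 0) : ∃ i, 0 < w i := by
  by_contra! h
  have h0 : (fun i => -w i) = 0 := (hasSum_zero_iff_of_nonneg fun i => neg_nonneg.2 (h i)).1
    (by simpa [hsum] using hw.hasSum.neg)
  exact hne (funext fun i => neg_eq_zero.1 (congrFun h0 i))

theorem exists_infinite_crossing {S : Set (ℕ × ℕ)} (hS : S.Infinite) (hlt : ∀ p ∈ S, p.1 < p.2) :
    ∃ B : Set ℕ, {p ∈ S | p.1 ∈ B ∧ p.2 ∉ B}.Infinite := by
  by_cases hfib : ∃ m, (S ∩ Prod.fst ⁻¹' {m}).Infinite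
  · obtain ⟨m, hm⟩ := hfib
    refine ⟨{m}, hm.mono ?_⟩
    rintro p ⟨hp, hpm⟩
    exact ⟨hp, hpm, (hpm ▸ hlt p hp).ne'⟩
  simp only [not_exists, not_infinite] at hfib
  have hfst : (Prod.fst '' S).Infinite := fun h =>
    hS (h.of_finite_fibers Prod.fst fun m _ => hfib m)
  have hunbdd : ∀ b, ∃ p ∈ S, b < p.1 := fun b => by
    obtain ⟨_, ⟨p, hp, rfl⟩, hb⟩ := hfst.exists_gt b
    exact ⟨p, hp, hb⟩
  choose next hnextS hnext using hunbdd
  let q (k : ℕ) : ℕ × ℕ := (fun p => next p.2)^[k] (next 0)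
  have hqS (k : ℕ) : q k ∈ S := by
    cases k <;> simp only [q, Function.iterate_succ_apply', Function.iterate_zero_apply, hnextS]
  have hstep (k : ℕ) : (q k).2 < (q (k + 1)).1 := by
    simp only [q, Function.iterate_succ_apply']
    exact hnext _
  have hmono : StrictMono fun k => (q k).1 :=
    strictMono_nat_of_lt_succ fun k => (hlt _ (hqS k)).trans (hstep k)
  refine ⟨range fun k => (q k).1,
    (infinite_range_of_injective fun a b h => hmono.injective (congrArg Prod.fst h)).mono ?_⟩
  rintro _ ⟨k, rfl⟩
  refine ⟨hqS k, ⟨k, rfl⟩, ?_⟩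
  rintro ⟨j, hj : (q j).1 = (q k).2⟩
  have h1 : (q k).1 < (q j).1 := hj ▸ hlt _ (hqS k)
  have h2 : (q j).1 < (q (k + 1)).1 := hj ▸ hstep k
  rw [hmono.lt_iff_lt] at h1 h2
  omega

noncomputable abbrev coord (k : ℕ) : ell1 →L[ℝ] ℝ := lp.evalCLM ℝ (fun _ => ℝ) 1 k

@[simp]
theorem coord_apply (k : ℕ) (v : ell1) : coord k v = v k :=
  rfl

theorem e_apply (m k : ℕ) : e m k = if k = m then 1 else 0 := by
  simp [e, Pi.single_apply]

noncomputable def halfDiff (m n : ℕ) : ell1 := (2 : ℝ)⁻¹ • (e m - e n)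

theorem mem_A {x : WeakSpace ℝ ell1} :
    x ∈ A ↔ ∃ m n, m < n ∧ (toWeakSpace ℝ ell1).symm x = halfDiff m n :=
  Iff.rfl

theorem map_halfDiff (f : ell1 →L[ℝ] ℝ) (m n : ℕ) :
    f (halfDiff m n) = 2⁻¹ * (f (e m) - f (e n)) := by
  rw [halfDiff, map_smul, map_sub, smul_eq_mul]

theorem halfDiff_apply (m n k : ℕ) :
    halfDiff m n k = 2⁻¹ * ((if k = m then 1 else 0) - if k = n then 1 else 0) := by
  rw [halfDiff, lp.coeFn_smul, lp.coeFn_sub]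
  simp [e_apply]

theorem half_lt_halfDiff_apply_sub_iff {m n m' n' : ℕ} (h : m' < n') :
    2⁻¹ < halfDiff m' n' m - halfDiff m' n' n ↔ m' = m ∧ n' = n := by
  simp only [halfDiff_apply]
  constructor
  · intro hlt
    split_ifs at hlt <;> first | omega | norm_num at hlt
  · rintro ⟨rfl, rfl⟩
    simp [h.ne, h.ne']

theorem eq_zero_or_eq_halfDiff {v : ell1}
    (hval : ∀ k, v k = -2⁻¹ ∨ v k = 0 ∨ v k = 2⁻¹)
    (hpair : ∀ k l, k ≠ l → |v k + v l| ≤ 2⁻¹)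
    (horder : ∀ k l, l < k → v k - v l ≤ 2⁻¹)
    (hsum : ∑' k, v k = 0) :
    v = 0 ∨ ∃ m n, m < n ∧ v = halfDiff m n := by
  by_cases hv : v = 0
  · exact Or.inl hv
  have hv' : ⇑v ≠ 0 := fun h => hv (lp.ext h)
  have hsummable : Summable v := (lp.memℓp v).summable_of_one
  obtain ⟨m, hm⟩ := exists_pos_of_tsum_eq_zero hsummable hsum hv'
  obtain ⟨n, hn⟩ := exists_pos_of_tsum_eq_zero hsummable.neg (by simp [tsum_neg, hsum])
    (neg_ne_zero.2 hv')
  replace hm : v m = 2⁻¹ := by rcases hval m with h | h | h <;> linarith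
  replace hn : v n = -2⁻¹ := by rcases hval n with h | h | h <;> simp at hn <;> linarith
  have hmn : m < n := by
    rcases lt_trichotomy m n with h | rfl | h
    · exact h
    · linarith
    · linarith [horder m n h]
  refine Or.inr ⟨m, n, hmn, lp.ext (funext fun k => ?_)⟩
  rw [halfDiff_apply]
  by_cases hkm : k = m
  · subst hkm
    simp [hm, hmn.ne]
  by_cases hkn : k = n
  · subst hkn
    simp [hn, hkm]
  rcases hval k with h | h | h
  · have := hpair k n hkn
    rw [h, hn] at this
    norm_num at this
  · simp [h, hkm, hkn]
  · have := hpair k m hkm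
    rw [h, hm] at this
    norm_num at this

theorem closure_A_subset : closure A ⊆ A ∪ {0} := by
  intro x hx
  have key : ∀ (f : ell1 →L[ℝ] ℝ) {T : Set ℝ}, IsClosed T →
      (∀ m n, m < n → 2⁻¹ * (f (e m) - f (e n)) ∈ T) → f ((toWeakSpace ℝ ell1).symm x) ∈ T :=
    fun f T hT hfT => apply_mem_of_mem_closure hx f hT fun y hy => by
      obtain ⟨m, n, hmn, hy⟩ := mem_A.1 hy
      rw [hy, map_halfDiff]
      exact hfT m n hmn
  have hval (k : ℕ) := key (coord k) (T := {-2⁻¹, 0, 2⁻¹}) (toFinite _).isClosed fun m n hmn => by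
    simp only [coord_apply, e_apply]
    split_ifs <;> norm_num
  have hpair (k l : ℕ) (hkl : k ≠ l) := key (coord k + coord l) (T := {t | |t| ≤ 2⁻¹})
    (isClosed_le continuous_abs continuous_const) fun m n hmn => by
      simp only [add_apply, coord_apply, e_apply]
      split_ifs <;> norm_num <;> omega
  have horder (k l : ℕ) (hlk : l < k) := key (coord k - coord l) (T := Iic 2⁻¹) isClosed_Iic
    fun m n hmn => by
      simp only [sub_apply, coord_apply, e_apply, mem_Iic]
      split_ifs <;> norm_num
      omega
  have hsum := key (lp.tsumCLM ℝ ℕ ℝ) (T := {0}) isClosed_singleton fun m n hmn => by simp [e]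
  rcases eq_zero_or_eq_halfDiff (by simpa using hval) (by simpa using hpair)
    (by simpa using horder) (by simpa using hsum) with h | h
  · exact Or.inr ((toWeakSpace ℝ ell1).symm.map_eq_zero_iff.1 h)
  · exact Or.inl h

theorem zero_mem_closure_A : (0 : WeakSpace ℝ ell1) ∈ closure A := by
  have hA : A = {y | ∃ m n : ℕ, m < n ∧
      (toWeakSpace ℝ ell1).symm y = (2 : ℝ)⁻¹ • e m - (2 : ℝ)⁻¹ • e n} := by
    simp only [A, smul_sub]
  rw [hA]
  exact zero_mem_closure_sub_of_norm_le (fun k => (2 : ℝ)⁻¹ • e k) (C := 2⁻¹) fun k => by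
    simp [e, norm_smul, lp.norm_single]

theorem halfDiff_injOn : InjOn (fun p : ℕ × ℕ => halfDiff p.1 p.2) {p | p.1 < p.2} := by
  rintro ⟨m, n⟩ hmn ⟨m', n'⟩ hmn' (h : halfDiff m n = halfDiff m' n')
  have hlt := (half_lt_halfDiff_apply_sub_iff (m := m) (n := n) hmn).2 ⟨rfl, rfl⟩
  rw [h] at hlt
  obtain ⟨rfl, rfl⟩ := (half_lt_halfDiff_apply_sub_iff hmn').1 hlt
  rfl

theorem isDiscrete_A : IsDiscrete A := by
  refine isDiscrete_iff_forall_mem_exists_isOpen.2 fun x hx => ?_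
  obtain ⟨m, n, hmn, hx⟩ := mem_A.1 hx
  let g := coord m - coord n
  refine ⟨{y | 2⁻¹ < g ((toWeakSpace ℝ ell1).symm y)},
    isOpen_lt continuous_const (continuous_apply_toWeakSpace_symm g), Set.ext fun y => ⟨?_, ?_⟩⟩
  · rintro ⟨hgy, hy⟩
    obtain ⟨m', n', hmn', hy⟩ := mem_A.1 hy
    obtain ⟨rfl, rfl⟩ := (half_lt_halfDiff_apply_sub_iff hmn').1 (by simpa [g, hy] using hgy)
    exact (toWeakSpace ℝ ell1).symm.injective (hy.trans hx.symm)
  · rintro rfl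
    refine ⟨?_, mem_A.2 ⟨m, n, hmn, hx⟩⟩
    simpa [g, hx] using (half_lt_halfDiff_apply_sub_iff hmn).2 ⟨rfl, rfl⟩

theorem tsumCLM_comp_indicatorCLM_e (B : Set ℕ) (m : ℕ) :
    (lp.tsumCLM ℝ ℕ ℝ ∘L lp.indicatorCLM ℝ ℝ 1 B) (e m) = B.indicator 1 m := by
  rw [ContinuousLinearMap.comp_apply, lp.tsumCLM_apply, lp.coe_indicatorCLM,
    tsum_eq_single m fun k hk => by simp [e_apply, hk]]
  by_cases hm : m ∈ B <;> simp [hm, e_apply]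

theorem finite_of_isCompact_of_subset_A_union_zero {C : Set (WeakSpace ℝ ell1)} (hCA : C ⊆ A ∪ {0})
    (hC : IsCompact C) : C.Finite := by
  refine not_infinite.1 fun hCinf => ?_
  let φ (p : ℕ × ℕ) : WeakSpace ℝ ell1 := toWeakSpace ℝ ell1 (halfDiff p.1 p.2)
  let S := {p : ℕ × ℕ | p.1 < p.2 ∧ φ p ∈ C}
  have hφ : InjOn φ {p | p.1 < p.2} := (toWeakSpace ℝ ell1).injective.comp_injOn halfDiff_injOn
  have hS : S.Infinite := by
    refine Infinite.of_image φ ((hCinf.sdiff (finite_singleton 0)).mono ?_)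
    rintro y ⟨hyC, hy0⟩
    obtain ⟨m, n, hmn, hy⟩ := mem_A.1 ((hCA hyC).resolve_right hy0)
    have hφy : φ (m, n) = y := by simp [φ, ← hy]
    exact ⟨(m, n), ⟨hmn, hφy ▸ hyC⟩, hφy⟩
  obtain ⟨B, hB⟩ := exists_infinite_crossing hS fun p hp => hp.1
  let g := lp.tsumCLM ℝ ℕ ℝ ∘L lp.indicatorCLM ℝ ℝ 1 B
  let D := C ∩ {y | 2⁻¹ ≤ g ((toWeakSpace ℝ ell1).symm y)}
  have hDA : D ⊆ A := fun y ⟨hyC, hy⟩ => (hCA hyC).resolve_right <| by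
    rintro rfl
    norm_num at hy
  have hD : D.Finite := (hC.inter_right (isClosed_le continuous_const
    (continuous_apply_toWeakSpace_symm g))).finite (isDiscrete_A.mono hDA)
  refine hB (Finite.of_injOn (f := φ) ?_ (hφ.mono fun p hp => hp.1.1) hD)
  rintro p ⟨⟨-, hpC⟩, h1, h2⟩
  refine ⟨hpC, ?_⟩
  show 2⁻¹ ≤ g (halfDiff p.1 p.2)
  rw [map_halfDiff, tsumCLM_comp_indicatorCLM_e, tsumCLM_comp_indicatorCLM_e]
  simp [h1, h2]

theorem stmt_12 :
    closure A = A ∪ {0} ∧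
      ∀ C : Set (WeakSpace ℝ ell1), C ⊆ A ∪ {0} → IsCompact C → C.Finite :=
  ⟨closure_A_subset.antisymm
      (union_subset subset_closure (singleton_subset_iff.2 zero_mem_closure_A)),
    fun _ => finite_of_isCompact_of_subset_A_union_zero⟩
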